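/- Let R be a commutative ring, let M be a submodule of an R-module N, and let x ∈ N. The following are equivalent: (1) there exists a GV-ideal J of R with Jx ⊆ M; (2) for every m ∈ w-Max(R), the image x/1 of x in the localization N_m lies in the image of M_m (the localization of the submodule M); (3) there exist s_1, …, s_n ∈ R such that the ideal (s_1, …, s_n) is a GV-ideal and s_i x ∈ M for all i = 1, …, n. (Applied with N the injective hull of a GV-torsion-free module M, this characterizes membership in the w-envelope M_w.) -/
import Mathlib


universe u v

section WDefs

variable (R : Type u) [CommRing R]

/-- The canonical `R`-linear map `R → Hom_R(J, R)`, `r ↦ (j ↦ r * j)`. -/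
def gvCanonicalMap (J : Ideal R) : R →ₗ[R] (J →ₗ[R] R) where
  toFun r := r • (J.subtype)
  map_add' x y := add_smul x y _
  map_smul' r x := by simp [mul_smul]

/-- A finitely generated ideal `J` of `R` is a GV-ideal (Glaz–Vasconcelos ideal)
if the canonical map `R → Hom_R(J, R)` is an isomorphism. -/
def IsGVIdeal (J : Ideal R) : Prop :=
  J.FG ∧ Function.Bijective (gvCanonicalMap R J)

/-- An ideal `I` of `R` is a w-ideal if whenever `J x ⊆ I` for some GV-ideal `J`,
then `x ∈ I`. -/
def IsWIdeal (I : Ideal R) : Prop :=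
  ∀ x : R, (∃ J : Ideal R, IsGVIdeal R J ∧ ∀ j ∈ J, j * x ∈ I) → x ∈ I

/-- `m` is a maximal w-ideal: maximal among the proper w-ideals of `R`. -/
def IsMaxWIdeal (m : Ideal R) : Prop :=
  IsWIdeal R m ∧ m ≠ ⊤ ∧ ∀ I : Ideal R, IsWIdeal R I → I ≠ ⊤ → m ≤ I → I = m

variable {M : Type v} [AddCommGroup M] [Module R M]

/-- `x` is a GV-torsion element if it is killed by some GV-ideal. -/
def IsGVTorsionElem (x : M) : Prop :=
  ∃ J : Ideal R, IsGVIdeal R J ∧ ∀ j ∈ J, j • x = 0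

variable (M)

/-- `M` is GV-torsion-free if it has no nonzero GV-torsion element. -/
def IsGVTorsionFree : Prop := ∀ x : M, IsGVTorsionElem R x → x = 0

/-- `M` is GV-torsion if all its elements are GV-torsion. -/
def IsGVTorsion : Prop := ∀ x : M, IsGVTorsionElem R x

/-- `M` is a w-module: GV-torsion-free and every map from a GV-ideal to `M`
extends to `R`. -/
def IsWModule : Prop :=
  IsGVTorsionFree R M ∧
    ∀ J : Ideal R, IsGVIdeal R J → ∀ f : J →ₗ[R] M,
      ∃ g : R →ₗ[R] M, ∀ x : J, g (x : R) = f x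

end WDefs

section Aux

variable {R : Type u} [CommRing R]

lemma gvCanonicalMap_apply (J : Ideal R) (r : R) (j : J) :
    gvCanonicalMap R J r j = r * (j : R) := rfl

lemma gv_unique {J : Ideal R} (h : IsGVIdeal R J) {r s : R}
    (hrs : ∀ j ∈ J, r * j = s * j) : r = s := by
  apply h.2.1
  ext j
  simpa [gvCanonicalMap_apply] using hrs j j.2

lemma gv_surj {J : Ideal R} (h : IsGVIdeal R J) (f : J →ₗ[R] R) :
    ∃ r : R, ∀ j : J, r * (j : R) = f j := by
  obtain ⟨r, hr⟩ := h.2.2 f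
  exact ⟨r, fun j => by rw [← hr]; rfl⟩

lemma isGVIdeal_top : IsGVIdeal R (⊤ : Ideal R) := by
  refine ⟨⟨{1}, by simp⟩, ?_, ?_⟩
  · intro a b hab
    have := congrArg (fun f : ((⊤ : Ideal R) →ₗ[R] R) => f ⟨1, trivial⟩) hab
    simpa [gvCanonicalMap_apply] using this
  · intro f
    refine ⟨f ⟨1, trivial⟩, ?_⟩
    ext j
    have h1 : (j : R) • (⟨1, trivial⟩ : (⊤ : Ideal R)) = j := by
      ext; simp
    conv_rhs => rw [← h1]
    rw [f.map_smul, smul_eq_mul, gvCanonicalMap_apply, mul_comm]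

lemma IsGVIdeal.mul {J K : Ideal R} (hJ : IsGVIdeal R J) (hK : IsGVIdeal R K) :
    IsGVIdeal R (J * K) := by
  have huniq : ∀ {a b : R}, (∀ x ∈ J * K, a * x = b * x) → a = b := by
    intro a b hab
    refine gv_unique hK fun k hk => gv_unique hJ fun j hj => ?_
    linear_combination hab (j * k) (Ideal.mul_mem_mul hj hk)
  constructor
  · exact Submodule.FG.mul hJ.1 hK.1
  constructor
  · intro a b hab
    refine huniq fun x hx => ?_
    have := congrArg (fun f : ((J * K : Ideal R) →ₗ[R] R) => f ⟨x, hx⟩) hab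
    simpa [gvCanonicalMap_apply] using this
  · intro f
    -- for each k : K define f_k : J →ₗ R
    have hmul : ∀ (j : J) (k : K), (j : R) * (k : R) ∈ J * K :=
      fun j k => Ideal.mul_mem_mul j.2 k.2
    let fk : K → (J →ₗ[R] R) := fun k =>
      { toFun := fun j => f ⟨(j : R) * (k : R), hmul j k⟩
        map_add' := fun a b => by
          have h4 : (⟨((a : R) + (b : R)) * (k : R), hmul (a + b) k⟩ : (J * K : Ideal R))
              = ⟨(a : R) * (k : R), hmul a k⟩ + ⟨(b : R) * (k : R), hmul b k⟩ :=
            Subtype.ext (by push_cast; ring)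
          show f _ = f _ + f _
          rw [← f.map_add]
          exact congrArg f (Subtype.ext (by push_cast; ring))
        map_smul' := fun c a => by
          have h4 : (⟨(c * (a : R)) * (k : R), hmul (c • a) k⟩ : (J * K : Ideal R))
              = c • ⟨(a : R) * (k : R), hmul a k⟩ :=
            Subtype.ext (by simp [smul_eq_mul]; ring)
          show f _ = c • f _
          rw [← f.map_smul]
          exact congrArg f (Subtype.ext (by push_cast [SetLike.val_smul, smul_eq_mul]; ring)) }
    choose rk hrk using fun k : K => gv_surj hJ (fk k)
    have hfk : ∀ (k : K) (j : J), rk k * (j : R) = f ⟨(j : R) * (k : R), hmul j k⟩ :=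
      fun k j => hrk k j
    let g : K →ₗ[R] R :=
      { toFun := rk
        map_add' := fun a b => by
          refine gv_unique hJ fun j hj => ?_
          have h1 : rk (a + b) * j = f ⟨j * ((a : R) + (b : R)), hmul ⟨j, hj⟩ (a + b)⟩ :=
            hfk (a + b) ⟨j, hj⟩
          have h2 : rk a * j = f ⟨j * (a : R), hmul ⟨j, hj⟩ a⟩ := hfk a ⟨j, hj⟩
          have h3 : rk b * j = f ⟨j * (b : R), hmul ⟨j, hj⟩ b⟩ := hfk b ⟨j, hj⟩
          have h4 : (⟨j * ((a : R) + (b : R)), hmul ⟨j, hj⟩ (a + b)⟩ : (J * K : Ideal R))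
              = ⟨j * (a : R), hmul ⟨j, hj⟩ a⟩ + ⟨j * (b : R), hmul ⟨j, hj⟩ b⟩ :=
            Subtype.ext (by push_cast; ring)
          rw [h1, h4, f.map_add, ← h2, ← h3, add_mul]
        map_smul' := fun c a => by
          refine gv_unique hJ fun j hj => ?_
          have h1 : rk (c • a) * j = f ⟨j * (c * (a : R)), hmul ⟨j, hj⟩ (c • a)⟩ :=
            hfk (c • a) ⟨j, hj⟩
          have h2 : rk a * j = f ⟨j * (a : R), hmul ⟨j, hj⟩ a⟩ := hfk a ⟨j, hj⟩
          have h4 : (⟨j * (c * (a : R)), hmul ⟨j, hj⟩ (c • a)⟩ : (J * K : Ideal R))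
              = c • ⟨j * (a : R), hmul ⟨j, hj⟩ a⟩ :=
            Subtype.ext (by simp [smul_eq_mul]; ring)
          rw [RingHom.id_apply, h1, h4, f.map_smul, smul_eq_mul, ← h2, smul_eq_mul]
          ring }
    obtain ⟨r, hr⟩ := gv_surj hK g
    refine ⟨r, ?_⟩
    ext ⟨x, hx⟩
    rw [gvCanonicalMap_apply]
    revert hx
    refine fun hx => Submodule.mul_induction_on' (C := fun y hy => r * y = f ⟨y, hy⟩) ?_ ?_ hx
    · intro a ha b hb
      have h1 : rk ⟨b, hb⟩ * a = f ⟨a * b, Ideal.mul_mem_mul ha hb⟩ := hfk ⟨b, hb⟩ ⟨a, ha⟩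
      have h2 : r * b = rk ⟨b, hb⟩ := hr ⟨b, hb⟩
      calc r * (a * b) = (r * b) * a := by ring
        _ = rk ⟨b, hb⟩ * a := by rw [h2]
        _ = f ⟨a * b, Ideal.mul_mem_mul ha hb⟩ := h1
    · intro x hx y hy h1 h2
      have h4 : (⟨x + y, Submodule.add_mem _ hx hy⟩ : (J * K : Ideal R))
          = ⟨x, hx⟩ + ⟨y, hy⟩ := rfl
      rw [mul_add, h1, h2, h4, f.map_add]

def wClosure (I : Ideal R) : Ideal R where
  carrier := {x | ∃ J : Ideal R, IsGVIdeal R J ∧ ∀ j ∈ J, j * x ∈ I}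
  zero_mem' := ⟨⊤, isGVIdeal_top, by simp⟩
  add_mem' := by
    rintro a b ⟨J, hJ, hja⟩ ⟨K, hK, hkb⟩
    refine ⟨J * K, hJ.mul hK, fun j hj => ?_⟩
    have hj' : j ∈ J ⊓ K := Ideal.mul_le_inf hj
    rw [mul_add]
    exact add_mem (hja j hj'.1) (hkb j hj'.2)
  smul_mem' := by
    rintro c x ⟨J, hJ, hjx⟩
    refine ⟨J, hJ, fun j hj => ?_⟩
    have := I.mul_mem_left c (hjx j hj)
    rw [smul_eq_mul, mul_left_comm]
    exact this

lemma le_wClosure (I : Ideal R) : I ≤ wClosure I :=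
  fun x hx => ⟨⊤, isGVIdeal_top, fun j _ => I.mul_mem_left j hx⟩

lemma mem_wClosure {I : Ideal R} {x : R} :
    x ∈ wClosure I ↔ ∃ J : Ideal R, IsGVIdeal R J ∧ ∀ j ∈ J, j * x ∈ I := Iff.rfl

lemma wClosure_isWIdeal (I : Ideal R) : IsWIdeal R (wClosure I) := by
  rintro x ⟨J', hJ', hx⟩
  obtain ⟨n, t, hspan⟩ := Submodule.fg_iff_exists_fin_generating_family.mp hJ'.1
  have htJ : ∀ i, t i ∈ J' := fun i => hspan ▸ Submodule.subset_span ⟨i, rfl⟩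
  choose K hK hKmem using fun i : Fin n => (hx (t i) (htJ i) : t i * x ∈ wClosure I)
  set Kp : Ideal R := ∏ i, K i with hKp_def
  have hKp : IsGVIdeal R Kp := by
    refine Finset.prod_induction K (IsGVIdeal R) (fun _ _ ha hb => ha.mul hb) ?_ (fun i _ => hK i)
    rw [Ideal.one_eq_top]; exact isGVIdeal_top
  refine ⟨J' * Kp, hJ'.mul hKp, fun j hj => ?_⟩
  refine Submodule.mul_induction_on (C := fun y => y * x ∈ I) hj ?_ ?_
  · intro a ha b hb
    have haux : ∀ a' ∈ J', a' * b * x ∈ I := by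
      intro a' ha'
      rw [← hspan] at ha'
      induction ha' using Submodule.span_induction with
      | mem y hy =>
        obtain ⟨i, rfl⟩ := hy
        have hbKi : b ∈ K i := (Ideal.prod_le_inf.trans (Finset.inf_le (Finset.mem_univ i))) hb
        have := hKmem i b hbKi
        rw [show t i * b * x = b * (t i * x) by ring]
        exact this
      | zero => simpa using I.zero_mem
      | add y z hy hz hy' hz' =>
        rw [show (y + z) * b * x = y * b * x + (z * b * x) by ring]
        exact add_mem hy' hz'
      | smul c y hy hy' =>
        rw [show (c • y) * b * x = c • (y * b * x) by simp [smul_eq_mul]; ring]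
        exact Submodule.smul_mem _ c hy'
    exact haux a ha
  · intro u v hu hv
    rw [add_mul]
    exact add_mem hu hv

lemma exists_maxWIdeal {I : Ideal R} (hI : IsWIdeal R I) (hne : I ≠ ⊤) :
    ∃ m : Ideal R, I ≤ m ∧ IsMaxWIdeal R m := by
  have hzorn := zorn_le_nonempty₀ {J : Ideal R | IsWIdeal R J ∧ J ≠ ⊤} ?_ I ⟨hI, hne⟩
  · obtain ⟨m, hIm, hmax⟩ := hzorn
    exact ⟨m, hIm, hmax.prop.1, hmax.prop.2,
      fun J hJw hJne hmJ => le_antisymm (hmax.le_of_ge ⟨hJw, hJne⟩ hmJ) hmJ⟩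
  · intro c hcs hchain y hy
    have hcne : c.Nonempty := ⟨y, hy⟩
    have hdir : DirectedOn (· ≤ ·) c := hchain.directedOn
    have hmem : ∀ z, z ∈ sSup c ↔ ∃ Ic ∈ c, z ∈ Ic :=
      fun z => Submodule.mem_sSup_of_directed hcne hdir
    refine ⟨sSup c, ⟨?_, ?_⟩, fun z hz => le_sSup hz⟩
    · -- sSup c is a w-ideal
      rintro x ⟨J, hJ, hx⟩
      obtain ⟨n, t, hspan⟩ := Submodule.fg_iff_exists_fin_generating_family.mp hJ.1
      have htJ : ∀ i, t i ∈ J := fun i => hspan ▸ Submodule.subset_span ⟨i, rfl⟩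
      have key : ∀ s : Finset (Fin n), ∃ Ic ∈ c, ∀ i ∈ s, t i * x ∈ Ic := by
        intro s
        induction s using Finset.induction with
        | empty => exact ⟨y, hy, by simp⟩
        | @insert a s ha ih =>
          obtain ⟨Ic, hIc, hall⟩ := ih
          obtain ⟨Ia, hIa, hmema⟩ := (hmem (t a * x)).mp (hx (t a) (htJ a))
          rcases hdir Ic hIc Ia hIa with ⟨Ib, hIb, h1, h2⟩
          exact ⟨Ib, hIb, fun i hi => by
            rcases Finset.mem_insert.mp hi with rfl | hi
            · exact h2 hmema
            · exact h1 (hall i hi)⟩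
      obtain ⟨Ic, hIc, hall⟩ := key Finset.univ
      have hIcw : IsWIdeal R Ic := (hcs hIc).1
      have : x ∈ Ic := by
        refine hIcw x ⟨J, hJ, fun j hj => ?_⟩
        rw [← hspan] at hj
        induction hj using Submodule.span_induction with
        | mem z hz =>
          obtain ⟨i, rfl⟩ := hz
          exact hall i (Finset.mem_univ i)
        | zero => simpa using Ic.zero_mem
        | add u v hu hv hu' hv' =>
          rw [add_mul]; exact add_mem hu' hv'
        | smul cc u hu hu' =>
          rw [smul_eq_mul, mul_assoc]; exact Ic.mul_mem_left cc hu'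
      exact (hmem x).mpr ⟨Ic, hIc, this⟩
    · -- sSup c ≠ ⊤
      intro htop
      have : (1 : R) ∈ sSup c := htop ▸ trivial
      obtain ⟨Ic, hIc, h1⟩ := (hmem 1).mp this
      exact (hcs hIc).2 ((Ideal.eq_top_iff_one Ic).mpr h1)

lemma IsMaxWIdeal.isPrime {m : Ideal R} (hm : IsMaxWIdeal R m) : m.IsPrime := by
  refine ⟨hm.2.1, ?_⟩
  intro a b hab
  by_contra h
  push_neg at h
  obtain ⟨ha, hb⟩ := h
  set I := m ⊔ Ideal.span {b} with hI
  have hbw : b ∈ wClosure I :=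
    le_wClosure I ((le_sup_right : Ideal.span {b} ≤ I) (Ideal.subset_span rfl))
  have htop : wClosure I = ⊤ := by
    by_contra hne
    have heq := hm.2.2 _ (wClosure_isWIdeal I) hne
      (le_trans le_sup_left (le_wClosure I))
    rw [heq] at hbw
    exact hb hbw
  obtain ⟨J, hJ, hJI⟩ : (1 : R) ∈ wClosure I := htop ▸ trivial
  refine ha (hm.1 a ⟨J, hJ, fun j hj => ?_⟩)
  have hjI : j ∈ I := by simpa using hJI j hj
  obtain ⟨u, hu, v, hv, rfl⟩ := Submodule.mem_sup.mp hjI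
  obtain ⟨r, rfl⟩ := Ideal.mem_span_singleton'.mp hv
  rw [show (u + r * b) * a = u * a + r * (a * b) by ring]
  exact add_mem (m.mul_mem_right a hu) (m.mul_mem_left r hab)

end Aux

/-- Let `M` be a submodule of an `R`-module `N` and `x ∈ N`. TFAE:
(1) `J x ⊆ M` for some GV-ideal `J`;
(2) for every maximal w-ideal `m` (necessarily prime), the image `x/1` of `x` in the
localization `N_m` lies in the localization of the submodule `M`;
(3) there are `s₁, …, sₙ ∈ R` generating a GV-ideal with `sᵢ x ∈ M` for all `i`. -/
theorem mem_wEnvelope_tfae (R : Type u) [CommRing R] {N : Type u} [AddCommGroup N] [Module R N]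
    (M : Submodule R N) (x : N) :
    List.TFAE [
      ∃ J : Ideal R, IsGVIdeal R J ∧ ∀ j ∈ J, j • x ∈ M,
      ∀ (m : Ideal R), IsMaxWIdeal R m → ∀ [hp : m.IsPrime],
        LocalizedModule.mkLinearMap m.primeCompl N x ∈ M.localized m.primeCompl,
      ∃ (n : ℕ) (s : Fin n → R),
        IsGVIdeal R (Ideal.span (Set.range s)) ∧ ∀ i, s i • x ∈ M ] := by
  tfae_have 1 → 3 := by
    rintro ⟨J, hJ, hmem⟩
    obtain ⟨n, t, hspan⟩ := Submodule.fg_iff_exists_fin_generating_family.mp hJ.1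
    have hspan' : Ideal.span (Set.range t) = J := hspan
    exact ⟨n, t, hspan' ▸ hJ,
      fun i => hmem (t i) (hspan' ▸ Submodule.subset_span ⟨i, rfl⟩)⟩
  tfae_have 3 → 1 := by
    rintro ⟨n, s, hGV, hmem⟩
    refine ⟨Ideal.span (Set.range s), hGV, fun j hj => ?_⟩
    induction hj using Submodule.span_induction with
    | mem y hy => obtain ⟨i, rfl⟩ := hy; exact hmem i
    | zero => simpa using M.zero_mem
    | add u v hu hv hu' hv' => rw [add_smul]; exact add_mem hu' hv'
    | smul c u hu hu' => rw [smul_eq_mul, mul_smul]; exact M.smul_mem c hu'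
  tfae_have 1 → 2 := by
    rintro ⟨J, hJ, hmem⟩ m hm hp
    have hJm : ¬ J ≤ m := by
      intro hle
      have h1 : (1 : R) ∈ m := hm.1 1 ⟨J, hJ, fun j hj => by simpa using hle hj⟩
      exact hm.2.1 ((Ideal.eq_top_iff_one m).mpr h1)
    obtain ⟨j, hjJ, hjm⟩ := SetLike.not_le_iff_exists.mp hJm
    rw [Submodule.mem_localized']
    refine ⟨j • x, hmem j hjJ, ⟨j, hjm⟩, ?_⟩
    exact IsLocalizedModule.mk'_cancel (LocalizedModule.mkLinearMap m.primeCompl N) x ⟨j, hjm⟩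
  tfae_have 2 → 1 := by
    intro h2
    set I : Ideal R := M.comap (LinearMap.toSpanSingleton R N x) with hIdef
    have hImem : ∀ r : R, r ∈ I ↔ r • x ∈ M := fun r => Iff.rfl
    by_contra hc
    have h1 : (1 : R) ∉ wClosure I := by
      rintro ⟨J, hJ, hJ1⟩
      exact hc ⟨J, hJ, fun j hj => by
        have := hJ1 j hj
        rw [mul_one] at this
        exact (hImem j).mp this⟩
    have hne : wClosure I ≠ ⊤ := fun h => h1 (h ▸ trivial)
    obtain ⟨m, hIm, hmW⟩ := exists_maxWIdeal (wClosure_isWIdeal I) hne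
    haveI : m.IsPrime := hmW.isPrime
    have hx2 := h2 m hmW
    rw [Submodule.mem_localized'] at hx2
    obtain ⟨y, hy, s, hs⟩ := hx2
    have heq : IsLocalizedModule.mk' (LocalizedModule.mkLinearMap m.primeCompl N) y s
        = IsLocalizedModule.mk' (LocalizedModule.mkLinearMap m.primeCompl N) x (1 : m.primeCompl) := by
      rw [IsLocalizedModule.mk'_one m.primeCompl (LocalizedModule.mkLinearMap m.primeCompl N)]; exact hs
    obtain ⟨c, hc'⟩ := (IsLocalizedModule.mk'_eq_mk'_iff
      (LocalizedModule.mkLinearMap m.primeCompl N) y x s 1).mp heq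
    have hcs : ((c : R) * (s : R)) • x = (c : R) • y := by
      have := hc'
      rw [Submonoid.smul_def, Submonoid.smul_def, Submonoid.smul_def, one_smul] at this
      rw [mul_smul]
      exact this
    have hmemI : (c : R) * (s : R) ∈ I := by
      rw [hImem, hcs]
      exact M.smul_mem _ hy
    have hmemm : (c : R) * (s : R) ∈ m := hIm (le_wClosure I hmemI)
    exact (mul_mem c.2 s.2 : (c : R) * (s : R) ∈ m.primeCompl) hmemm
  tfae_finish
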